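/- arXiv:1609.02040 — 4 statements merged into one kernel-verified Lean document; each statement's English description precedes it below -/
import Mathlib

section
/- Let L : (Fin n → ℝ) × (Fin n → ℝ) → ℝ be continuous. Suppose that for every continuously differentiable path x : ℝ → (Fin n → ℝ) on an interval [α, β] and every continuously differentiable φ : [a, b] → [α, β] with φ(a) = α, φ(b) = β and φ' > 0 on [a, b], one has ∫_a^b L(x(φ(u)), φ'(u) • x'(φ(u))) du = ∫_α^β L(x(t), x'(t)) dt. Then L is positively 1-homogeneous in its second argument: L(x, λv) = λ·L(x, v) for all x, v and all λ > 0. -/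
/-!
Test the invariance on a straight line `t ↦ x + t • v` traversed at unit speed, against the
same line reparameterized by `φ u = l * u`. After the linear substitution `t = l * u` the two
actions differ by the integral of `t ↦ L (x + t • v, l • v) - l * L (x + t • v, v)` over
`[α, β]`. This vanishes for every interval, so the continuous integrand vanishes, and at
`t = 0` that is the homogeneity identity.
-/

open intervalIntegral

theorem eq_zero_of_forall_intervalIntegral_eq_zero {E : Type*} [NormedAddCommGroup E]
    [NormedSpace ℝ E] [CompleteSpace E] {f : ℝ → E} (hf : Continuous f)
    (h : ∀ α β : ℝ, α ≤ β → ∫ t in α..β, f t = 0) : f = 0 := by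
  have hF : (fun s => ∫ t in (0 : ℝ)..s, f t) = fun _ => 0 := by
    funext s
    rcases le_total 0 s with hs | hs
    · exact h 0 s hs
    · rw [integral_symm, h s 0 hs, neg_zero]
  funext s
  rw [← hf.deriv_integral f 0 s, hF, deriv_const, Pi.zero_apply]

def ActionReparamInvariant {n : ℕ} (L : (Fin n → ℝ) × (Fin n → ℝ) → ℝ) : Prop :=
  ∀ (α β a b : ℝ), a ≤ b →
    ∀ (x x' : ℝ → Fin n → ℝ),
      (∀ t ∈ Set.Icc α β, HasDerivAt x (x' t) t) →
      ContinuousOn x' (Set.Icc α β) →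
    ∀ (φ φ' : ℝ → ℝ),
      (∀ u ∈ Set.Icc a b, HasDerivAt φ (φ' u) u) →
      ContinuousOn φ' (Set.Icc a b) →
      (∀ u ∈ Set.Icc a b, 0 < φ' u) →
      Set.MapsTo φ (Set.Icc a b) (Set.Icc α β) →
      φ a = α → φ b = β →
      ∫ u in a..b, L (x (φ u), φ' u • x' (φ u)) = ∫ t in α..β, L (x t, x' t)

theorem ActionReparamInvariant.integral_line_smul {n : ℕ}
    {L : (Fin n → ℝ) × (Fin n → ℝ) → ℝ} (h : ActionReparamInvariant L)
    (x v : Fin n → ℝ) {l : ℝ} (hl : 0 < l) {α β : ℝ} (hαβ : α ≤ β) :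
    ∫ t in α..β, L (x + t • v, l • v) = l * ∫ t in α..β, L (x + t • v, v) := by
  have hmaps : Set.MapsTo (fun u => l * u) (Set.Icc (α / l) (β / l)) (Set.Icc α β) :=
    fun u ⟨hαu, huβ⟩ => ⟨(div_le_iff₀' hl).1 hαu, (le_div_iff₀' hl).1 huβ⟩
  have hreparam := h α β (α / l) (β / l) (div_le_div_of_nonneg_right hαβ hl.le)
    (fun t => x + t • v) (fun _ => v)
    (fun t _ => by simpa using ((hasDerivAt_id t).smul_const v).const_add x) continuousOn_const
    (fun u => l * u) (fun _ => l) (fun u _ => by simpa using (hasDerivAt_id u).const_mul l)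
    continuousOn_const (fun _ _ => hl) hmaps (mul_div_cancel₀ α hl.ne') (mul_div_cancel₀ β hl.ne')
  rw [← hreparam, ← smul_eq_mul, smul_integral_comp_mul_left (fun t => L (x + t • v, l • v)) l,
    mul_div_cancel₀ α hl.ne', mul_div_cancel₀ β hl.ne']

/-- If the action of a continuous Lagrangian along every continuously
differentiable path is independent of the (admissible) parameterization of the
path, then the Lagrangian is positively 1-homogeneous in its velocity
argument. -/
theorem parameterization_independent_implies_homogeneous {n : ℕ}
    (L : (Fin n → ℝ) × (Fin n → ℝ) → ℝ)
    (hL : Continuous L)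
    (h : ∀ (α β a b : ℝ), a ≤ b →
      ∀ (x x' : ℝ → Fin n → ℝ),
        (∀ t ∈ Set.Icc α β, HasDerivAt x (x' t) t) →
        ContinuousOn x' (Set.Icc α β) →
      ∀ (φ φ' : ℝ → ℝ),
        (∀ u ∈ Set.Icc a b, HasDerivAt φ (φ' u) u) →
        ContinuousOn φ' (Set.Icc a b) →
        (∀ u ∈ Set.Icc a b, 0 < φ' u) →
        Set.MapsTo φ (Set.Icc a b) (Set.Icc α β) →
        φ a = α → φ b = β →
        ∫ u in a..b, L (x (φ u), φ' u • x' (φ u)) = ∫ t in α..β, L (x t, x' t)) :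
    ∀ (x v : Fin n → ℝ) (l : ℝ), 0 < l → L (x, l • v) = l * L (x, v) := by
  intro x v l hl
  have hline : ∀ w, Continuous fun t : ℝ => L (x + t • v, w) := fun w => by fun_prop
  have hdefect : (fun t : ℝ => L (x + t • v, l • v) - l * L (x + t • v, v)) = 0 := by
    refine eq_zero_of_forall_intervalIntegral_eq_zero (by fun_prop) fun α β hαβ => ?_
    rw [integral_sub ((hline _).intervalIntegrable α β)
        (((hline v).const_mul l).intervalIntegrable α β),
      integral_const_mul, ActionReparamInvariant.integral_line_smul h x v hl hαβ, sub_self]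
  simpa [sub_eq_zero] using congrFun hdefect 0
end

section
/- Let L : (Fin n → ℝ) × (Fin n → ℝ) → ℝ be continuously differentiable on the set of points (x, v) with v ≠ 0 and positively 1-homogeneous in its second argument. Let x : ℝ → (Fin n → ℝ) be a twice continuously differentiable path on [α, β] with nonvanishing derivative, let φ : [a, b] → [α, β] be twice continuously differentiable with φ(a) = α, φ(b) = β and φ' > 0, and set y = x ∘ φ. Let N : (Fin n → ℝ)* → ℝ be any fixed function on covectors (e.g. a Minkowski-type seminorm) satisfying N(λ·ξ) = λ·N(ξ) for λ > 0. Then ∫_a^b N( D₁L(y(u), y'(u)) − d/du [D₂L(y(u), y'(u))] ) du = ∫_α^β N( D₁L(x(t), x'(t)) − d/dt [D₂L(x(t), x'(t))] ) dt; that is, the ageodesicity of a path does not depend on its admissible parameterization. -/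
/-!
Under `y = x ∘ φ` the velocity is multiplied by `φ' > 0`. By homogeneity of `L`, this multiplies
`D₁L` by `φ'` and leaves `D₂L` unchanged, so the momentum `D₂L` along `y` is the momentum along `x`
composed with `φ`, and the chain rule gives its derivative a factor `φ'` too. Hence the
Euler–Lagrange covector of `y` at `u` is `φ'(u)` times that of `x` at `φ(u)`, the homogeneity of
`N` turns the integrand for `y` into `φ'(u) · N(E_x(φ(u)))`, and the substitution `t = φ(u)`
concludes. The scaling rules and the chain rule used here hold unconditionally: at points of
non-differentiability both sides are the junk value `0`.
-/

open Set Filter Topology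

section Calculus

variable {𝕜 E F : Type*} [NontriviallyNormedField 𝕜] [NormedAddCommGroup E] [NormedSpace 𝕜 E]
  [NormedAddCommGroup F] [NormedSpace 𝕜 F]

theorem HasFDerivAt.rescale_of_homogeneous {f : E → F} {f' : E →L[𝕜] F} {c : 𝕜} {v : E}
    (hc : c ≠ 0) (hf : ∀ w, f (c • w) = c • f w) (h : HasFDerivAt f f' v) :
    HasFDerivAt f f' (c • v) := by
  have hrescale : f = fun w => c • f (c⁻¹ • w) := by
    funext w; rw [← hf, smul_inv_smul₀ hc]
  have hcomp : HasFDerivAt (fun w => f (c⁻¹ • w)) (f'.comp (c⁻¹ • ContinuousLinearMap.id 𝕜 E))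
      (c • v) := by
    refine HasFDerivAt.comp (c • v) ?_ ((hasFDerivAt_id _).const_smul c⁻¹)
    simpa only [inv_smul_smul₀ hc] using h
  have hf' : c • f'.comp (c⁻¹ • ContinuousLinearMap.id 𝕜 E) = f' := by
    ext w
    simp [smul_inv_smul₀ hc]
  rw [hrescale, ← hf']
  exact hcomp.const_smul c

theorem fderiv_smul_eq_of_homogeneous {f : E → F} {c : 𝕜} (hc : c ≠ 0)
    (hf : ∀ w, f (c • w) = c • f w) (v : E) : fderiv 𝕜 f (c • v) = fderiv 𝕜 f v := by
  by_cases hv : DifferentiableAt 𝕜 f v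
  · exact (hv.hasFDerivAt.rescale_of_homogeneous hc hf).fderiv
  · have hinv : ∀ w, f (c⁻¹ • w) = c⁻¹ • f w := fun w => by
      rw [eq_inv_smul_iff₀ hc, ← hf, smul_inv_smul₀ hc]
    have hcv : ¬ DifferentiableAt 𝕜 f (c • v) := fun h => hv <| by
      simpa [inv_smul_smul₀ hc] using
        (h.hasFDerivAt.rescale_of_homogeneous (inv_ne_zero hc) hinv).differentiableAt
    rw [fderiv_zero_of_not_differentiableAt hv, fderiv_zero_of_not_differentiableAt hcv]

-- If `g ∘ φ` is differentiable at `u`, so is `g = (g ∘ φ) ∘ φ⁻¹` at `φ u`, by the inverse function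
-- theorem.
theorem HasStrictDerivAt.deriv_comp [CompleteSpace 𝕜] {φ : 𝕜 → 𝕜} {c u : 𝕜}
    (hφ : HasStrictDerivAt φ c u) (hc : c ≠ 0) (g : 𝕜 → F) :
    deriv (g ∘ φ) u = c • deriv g (φ u) := by
  by_cases hg : DifferentiableAt 𝕜 g (φ u)
  · exact (hg.hasDerivAt.scomp u hφ.hasDerivAt).deriv
  · suffices ¬ DifferentiableAt 𝕜 (g ∘ φ) u by
      rw [deriv_zero_of_not_differentiableAt hg, deriv_zero_of_not_differentiableAt this, smul_zero]
    intro hgφ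
    set ψ := hφ.localInverse φ c u hc
    have hψu : ψ (φ u) = u := (hφ.eventually_left_inverse hc).self_of_nhds
    have hgφψ : DifferentiableAt 𝕜 ((g ∘ φ) ∘ ψ) (φ u) :=
      (hψu ▸ hgφ).comp _ (hφ.to_localInverse hc).hasDerivAt.differentiableAt
    refine hg (hgφψ.congr_of_eventuallyEq ?_)
    filter_upwards [hφ.eventually_right_inverse hc] with y hy
    exact congrArg g hy.symm

end Calculus

section EulerLagrange

variable {E : Type*} [NormedAddCommGroup E] [NormedSpace ℝ E]

noncomputable def eulerLagrange (L : E × E → ℝ) (x : ℝ → E) (t : ℝ) : E →L[ℝ] ℝ :=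
  fderiv ℝ (fun y => L (y, deriv x t)) (x t)
    - deriv (fun s => fderiv ℝ (fun w => L (x s, w)) (deriv x s)) t

variable {L : E × E → ℝ} (hhom : ∀ (x v : E) (l : ℝ), 0 < l → L (x, l • v) = l * L (x, v))
include hhom

theorem fderiv_fst_smul_of_homogeneous (x v : E) {l : ℝ} (hl : 0 < l) :
    fderiv ℝ (fun y => L (y, l • v)) x = l • fderiv ℝ (fun y => L (y, v)) x := by
  have hscale : (fun y => L (y, l • v)) = l • fun y => L (y, v) := funext fun y => hhom y v l hl
  rw [hscale, fderiv_const_smul_field, Pi.smul_apply]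

theorem fderiv_snd_smul_of_homogeneous (x v : E) {l : ℝ} (hl : 0 < l) :
    fderiv ℝ (fun w => L (x, w)) (l • v) = fderiv ℝ (fun w => L (x, w)) v :=
  fderiv_smul_eq_of_homogeneous hl.ne' (fun w => hhom x w l hl) v

theorem eulerLagrange_comp {φ φ' : ℝ → ℝ} {U : Set ℝ} (hU : IsOpen U)
    (hφ : ∀ s ∈ U, HasStrictDerivAt φ (φ' s) s) (hpos : ∀ s ∈ U, 0 < φ' s) (x : ℝ → E) {u : ℝ}
    (hu : u ∈ U) : eulerLagrange L (x ∘ φ) u = φ' u • eulerLagrange L x (φ u) := by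
  have hvel : ∀ s ∈ U, deriv (x ∘ φ) s = φ' s • deriv x (φ s) := fun s hs =>
    (hφ s hs).deriv_comp (hpos s hs).ne' x
  have hmomentum : (fun s => fderiv ℝ (fun w => L ((x ∘ φ) s, w)) (deriv (x ∘ φ) s))
      =ᶠ[𝓝 u] (fun t => fderiv ℝ (fun w => L (x t, w)) (deriv x t)) ∘ φ := by
    filter_upwards [hU.mem_nhds hu] with s hs
    rw [Function.comp_apply, hvel s hs]
    exact fderiv_snd_smul_of_homogeneous hhom _ _ (hpos s hs)
  rw [eulerLagrange, eulerLagrange, hmomentum.deriv_eq, hvel u hu, Function.comp_apply,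
    (hφ u hu).deriv_comp (hpos u hu).ne', fderiv_fst_smul_of_homogeneous hhom _ _ (hpos u hu),
    smul_sub]

end EulerLagrange

theorem ageodesicity_parameterization_independent_general {n : ℕ}
    (L : (Fin n → ℝ) × (Fin n → ℝ) → ℝ)
    (hhom : ∀ (x v : Fin n → ℝ) (l : ℝ), 0 < l → L (x, l • v) = l * L (x, v))
    (α β a b : ℝ) (hab : a ≤ b)
    (x : ℝ → Fin n → ℝ)
    (φ : ℝ → ℝ) (hφ : ContDiffOn ℝ 2 φ (Set.Icc a b))
    (hφpos : ∀ u ∈ Set.Icc a b, 0 < deriv φ u)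
    (hφa : φ a = α) (hφb : φ b = β)
    (N : ((Fin n → ℝ) →L[ℝ] ℝ) → ℝ)
    (hN : ∀ (ξ : (Fin n → ℝ) →L[ℝ] ℝ) (l : ℝ), 0 < l → N (l • ξ) = l * N ξ) :
    (∫ u in a..b,
      N (fderiv ℝ (fun y => L (y, deriv (x ∘ φ) u)) ((x ∘ φ) u)
        - deriv (fun s => fderiv ℝ (fun w => L ((x ∘ φ) s, w)) (deriv (x ∘ φ) s)) u))
      =
    (∫ t in α..β,
      N (fderiv ℝ (fun y => L (y, deriv x t)) (x t)
        - deriv (fun s => fderiv ℝ (fun w => L (x s, w)) (deriv x s)) t)) := by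
  change ∫ u in a..b, N (eulerLagrange L (x ∘ φ) u) = ∫ t in α..β, N (eulerLagrange L x t)
  have hφ' : ∀ u ∈ Ioo a b, HasStrictDerivAt φ (deriv φ u) u := fun u hu =>
    (hφ.contDiffAt (Icc_mem_nhds hu.1 hu.2)).hasStrictDerivAt (by norm_num)
  have hpos : ∀ u ∈ Ioo a b, 0 < deriv φ u := fun u hu => hφpos u (Ioo_subset_Icc_self hu)
  calc ∫ u in a..b, N (eulerLagrange L (x ∘ φ) u)
      = ∫ u in a..b, ((fun t => N (eulerLagrange L x t)) ∘ φ) u * deriv φ u := by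
        refine intervalIntegral.integral_congr_Ioo_of_le hab fun u hu => ?_
        rw [eulerLagrange_comp hhom isOpen_Ioo hφ' hpos x hu, hN _ _ (hpos u hu), mul_comm,
          Function.comp_apply]
    _ = ∫ t in α..β, N (eulerLagrange L x t) := by
        rw [← hφa, ← hφb]
        refine intervalIntegral.integral_comp_mul_deriv_of_deriv_nonneg ?_ ?_ ?_
        · exact hφ.continuousOn.mono (uIcc_of_le hab).subset
        · rw [min_eq_left hab, max_eq_right hab]
          exact fun u hu => (hφ' u hu).hasDerivAt
        · rw [min_eq_left hab, max_eq_right hab]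
          exact fun u hu => (hpos u hu).le

/-- **Parameterization independence of the ageodesicity.** For a geometric
Lagrangian (continuously differentiable away from zero velocity and positively
1-homogeneous in the velocity), and any positively 1-homogeneous function `N`
on covectors, the integral of `N` applied to the Euler–Lagrange covector along
a path is the same for any admissible reparameterization `y = x ∘ φ` of the
path. -/
theorem ageodesicity_parameterization_independent {n : ℕ}
    (L : (Fin n → ℝ) × (Fin n → ℝ) → ℝ)
    (hL : ContDiffOn ℝ 1 L {p : (Fin n → ℝ) × (Fin n → ℝ) | p.2 ≠ 0})
    (hhom : ∀ (x v : Fin n → ℝ) (l : ℝ), 0 < l → L (x, l • v) = l * L (x, v))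
    (α β a b : ℝ) (hab : a ≤ b)
    (x : ℝ → Fin n → ℝ) (hx : ContDiffOn ℝ 2 x (Set.Icc α β))
    (hx' : ∀ t ∈ Set.Icc α β, deriv x t ≠ 0)
    (φ : ℝ → ℝ) (hφ : ContDiffOn ℝ 2 φ (Set.Icc a b))
    (hφpos : ∀ u ∈ Set.Icc a b, 0 < deriv φ u)
    (hφmaps : Set.MapsTo φ (Set.Icc a b) (Set.Icc α β))
    (hφa : φ a = α) (hφb : φ b = β)
    (N : ((Fin n → ℝ) →L[ℝ] ℝ) → ℝ)
    (hN : ∀ (ξ : (Fin n → ℝ) →L[ℝ] ℝ) (l : ℝ), 0 < l → N (l • ξ) = l * N ξ) :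
    (∫ u in a..b,
      N (fderiv ℝ (fun y => L (y, deriv (x ∘ φ) u)) ((x ∘ φ) u)
        - deriv (fun s => fderiv ℝ (fun w => L ((x ∘ φ) s, w)) (deriv (x ∘ φ) s)) u))
      =
    (∫ t in α..β,
      N (fderiv ℝ (fun y => L (y, deriv x t)) (x t)
        - deriv (fun s => fderiv ℝ (fun w => L (x s, w)) (deriv x s)) t)) :=
  ageodesicity_parameterization_independent_general L hhom α β a b hab x φ hφ hφpos hφa hφb N hN
end

section
/- Fix reals c > 0, m > 0, α > 0, β > 0 and v with 0 < v < c. Define the path X : (0, ∞) → (Fin 4 → ℝ) by X(t) = (β·c·(t − α/t), β·v·t, 0, 0), and let η(u, w) = u 0 · w 0 − u 1 · w 1 − u 2 · w 2 − u 3 · w 3 be the Minkowski bilinear form. Then X'(t) is timelike for every t > 0 (η(X'(t), X'(t)) > 0), and if U(t) = (η(X'(t), X'(t)))^{−1/2} • X'(t) denotes the normalized velocity, then for all t > 0 the Minkowski norm of m·c·U'(t) satisfies √|η(m·c·U'(t), m·c·U'(t))| = 2·m·v·α·t·c² / ((α + t²)²·c² − v²·t⁴). -/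
/-!
Normalizing a timelike velocity `V` gives `U' = |V|⁻¹ (V' − (η(V, V') / η(V, V)) V)`, i.e. the
part of the acceleration Minkowski-orthogonal to `V`, rescaled. For motion in the `(x⁰, x¹)`-plane
with `V = (a, b, 0, 0)` this yields `η(U', U') = −((a b' − a' b) / (a² − b²))²`, the squared rate
of change of the rapidity `artanh (b / a)`. Along the hyperbolic path `V = β (c (1 + α/t²), v)`
and `V' = (−2βcα/t³, 0)`, which gives the claimed closed form.
-/

/-- The Minkowski bilinear form of signature (+, −, −, −) on `Fin 4 → ℝ`. -/
def minkowski (u w : Fin 4 → ℝ) : ℝ :=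
  u 0 * w 0 - u 1 * w 1 - u 2 * w 2 - u 3 * w 3

theorem minkowski_smul_smul (a b : ℝ) (u w : Fin 4 → ℝ) :
    minkowski (a • u) (b • w) = a * b * minkowski u w := by
  simp only [minkowski, Pi.smul_apply, smul_eq_mul]; ring

theorem minkowski_planar (a b a' b' : ℝ) :
    minkowski ![a, b, 0, 0] ![a', b', 0, 0] = a * a' - b * b' := by
  simp [minkowski]

theorem minkowski_sub_smul_self (u w : Fin 4 → ℝ) (k : ℝ) :
    minkowski (w - k • u) (w - k • u)
      = minkowski w w - 2 * k * minkowski u w + k ^ 2 * minkowski u u := by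
  simp only [minkowski, Pi.sub_apply, Pi.smul_apply, smul_eq_mul]; ring

theorem minkowski_sub_proj_self (u w : Fin 4 → ℝ) (hu : minkowski u u ≠ 0) :
    minkowski (w - (minkowski u w / minkowski u u) • u) (w - (minkowski u w / minkowski u u) • u)
      = minkowski w w - minkowski u w ^ 2 / minkowski u u := by
  rw [minkowski_sub_smul_self]
  field_simp
  ring

theorem HasDerivAt.minkowski_self {V : ℝ → Fin 4 → ℝ} {V' : Fin 4 → ℝ} {t : ℝ}
    (h : HasDerivAt V V' t) :
    HasDerivAt (fun s => minkowski (V s) (V s)) (2 * minkowski (V t) V') t := by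
  have hi := hasDerivAt_pi.1 h
  refine ((((hi 0).mul (hi 0)).sub ((hi 1).mul (hi 1))).sub ((hi 2).mul (hi 2))).sub
    ((hi 3).mul (hi 3)) |>.congr_deriv ?_
  simp only [minkowski]; ring

noncomputable def normalizedVelocityDeriv (v a : Fin 4 → ℝ) : Fin 4 → ℝ :=
  (√(minkowski v v))⁻¹ • (a - (minkowski v a / minkowski v v) • v)

theorem HasDerivAt.minkowski_normalize {V : ℝ → Fin 4 → ℝ} {V' : Fin 4 → ℝ} {t : ℝ}
    (h : HasDerivAt V V' t) (hV : 0 < minkowski (V t) (V t)) :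
    HasDerivAt (fun s => (√(minkowski (V s) (V s)))⁻¹ • V s)
      (normalizedVelocityDeriv (V t) V') t := by
  have hs : 0 < √(minkowski (V t) (V t)) := Real.sqrt_pos.2 hV
  refine (((h.minkowski_self.sqrt hV.ne').inv hs.ne').smul h).congr_deriv ?_
  ext i
  simp only [normalizedVelocityDeriv, Pi.add_apply, Pi.smul_apply, Pi.sub_apply, Pi.inv_apply,
    smul_eq_mul]
  field_simp
  rw [Real.sq_sqrt hV.le]
  ring

theorem minkowski_planar_gram (a b a' b' : ℝ) (h : a ^ 2 ≠ b ^ 2) :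
    minkowski ![a', b', 0, 0] ![a', b', 0, 0]
      - minkowski ![a, b, 0, 0] ![a', b', 0, 0] ^ 2 / minkowski ![a, b, 0, 0] ![a, b, 0, 0]
      = -(a * b' - a' * b) ^ 2 / (a ^ 2 - b ^ 2) := by
  simp only [minkowski_planar]
  have := sub_ne_zero.2 h
  field_simp
  ring

theorem minkowski_normalizedVelocityDeriv_self (v a : Fin 4 → ℝ) (hv : 0 < minkowski v v) :
    minkowski (normalizedVelocityDeriv v a) (normalizedVelocityDeriv v a)
      = (minkowski a a - minkowski v a ^ 2 / minkowski v v) / minkowski v v := by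
  rw [normalizedVelocityDeriv, minkowski_smul_smul, minkowski_sub_proj_self v a hv.ne',
    ← mul_inv, ← sq, Real.sq_sqrt hv.le, inv_mul_eq_div]

theorem minkowski_normalizedVelocityDeriv_planar (a b a' b' : ℝ) (h : b ^ 2 < a ^ 2) :
    minkowski (normalizedVelocityDeriv ![a, b, 0, 0] ![a', b', 0, 0])
        (normalizedVelocityDeriv ![a, b, 0, 0] ![a', b', 0, 0])
      = -((a * b' - a' * b) / (a ^ 2 - b ^ 2)) ^ 2 := by
  have hq : minkowski ![a, b, 0, 0] ![a, b, 0, 0] = a ^ 2 - b ^ 2 := by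
    rw [minkowski_planar]; ring
  have hab : a ^ 2 - b ^ 2 ≠ 0 := by linarith
  rw [minkowski_normalizedVelocityDeriv_self _ _ (by linarith),
    minkowski_planar_gram a b a' b' (sub_ne_zero.1 hab), hq]
  field_simp

theorem HasDerivAt.planar {f g : ℝ → ℝ} {f' g' t : ℝ} (hf : HasDerivAt f f' t)
    (hg : HasDerivAt g g' t) :
    HasDerivAt (fun s => ![f s, g s, 0, 0]) ![f', g', 0, 0] t := by
  refine hasDerivAt_pi.2 fun i => ?_
  fin_cases i
  exacts [hf, hg, hasDerivAt_const t 0, hasDerivAt_const t 0]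

section HyperbolicPath

variable (c α β v : ℝ)

theorem hasDerivAt_hyperbolicPath {s : ℝ} (hs : s ≠ 0) :
    HasDerivAt (fun s => ![β * c * (s - α / s), β * v * s, 0, 0])
      ![β * c * (1 + α / s ^ 2), β * v, 0, 0] s := by
  refine HasDerivAt.planar (HasDerivAt.const_mul _ ?_)
    (by simpa using (hasDerivAt_id s).const_mul (β * v))
  refine ((hasDerivAt_id s).sub ((hasDerivAt_const s α).div (hasDerivAt_id s) hs)).congr_deriv ?_
  simp; ring

theorem hasDerivAt_hyperbolicPath_velocity {t : ℝ} (ht : t ≠ 0) :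
    HasDerivAt (fun s => ![β * c * (1 + α / s ^ 2), β * v, 0, 0])
      ![-(2 * β * c * α / t ^ 3), 0, 0, 0] t := by
  refine HasDerivAt.planar ?_ (hasDerivAt_const t (β * v))
  refine (((hasDerivAt_const t α).div (hasDerivAt_pow 2 t) (by positivity)).const_add 1
    |>.const_mul (β * c)).congr_deriv ?_
  field_simp; ring

theorem hyperbolicPath_velocity_sq {t : ℝ} (ht : t ≠ 0) :
    (β * c * (1 + α / t ^ 2)) ^ 2 - (β * v) ^ 2
      = β ^ 2 * ((α + t ^ 2) ^ 2 * c ^ 2 - v ^ 2 * t ^ 4) / t ^ 4 := by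
  field_simp
  ring

theorem hyperbolicPath_denominator_pos {t : ℝ} (hα : 0 ≤ α) (hv : 0 ≤ v) (hvc : v < c)
    (ht : t ≠ 0) : 0 < (α + t ^ 2) ^ 2 * c ^ 2 - v ^ 2 * t ^ 4 := by
  have ht2 : 0 < t ^ 2 := by positivity
  have : (v * t ^ 2) ^ 2 < (c * (α + t ^ 2)) ^ 2 :=
    pow_lt_pow_left₀ (by nlinarith) (by positivity) two_ne_zero
  linarith

end HyperbolicPath

/-- For the hyperbolic path `X(t) = β • (c(t − α/t), v t, 0, 0)` on `(0, ∞)`,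
the velocity `X'(t)` is timelike, and the ageodesicity integrand for the
free-particle geometric Lagrangian — the Minkowski norm of `m c U'(t)`, where
`U` is the normalized velocity — equals
`2 m v α t c² / ((α + t²)² c² − v² t⁴)`. -/
theorem ageodesicity_integrand_of_hyperbolic_path
    (c m α β v : ℝ) (hc : 0 < c) (hm : 0 < m) (hα : 0 < α) (hβ : 0 < β)
    (hv : 0 < v) (hvc : v < c)
    (X : ℝ → Fin 4 → ℝ)
    (hX : ∀ t : ℝ, X t = ![β * c * (t - α / t), β * v * t, 0, 0])
    (U : ℝ → Fin 4 → ℝ)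
    (hU : ∀ t : ℝ,
      U t = (Real.sqrt (minkowski (deriv X t) (deriv X t)))⁻¹ • deriv X t) :
    ∀ t : ℝ, 0 < t →
      0 < minkowski (deriv X t) (deriv X t) ∧
      Real.sqrt |minkowski ((m * c) • deriv U t) ((m * c) • deriv U t)|
        = 2 * m * v * α * t * c ^ 2 / ((α + t ^ 2) ^ 2 * c ^ 2 - v ^ 2 * t ^ 4) := by
  intro t ht
  have hXd : ∀ s, 0 < s → HasDerivAt X ![β * c * (1 + α / s ^ 2), β * v, 0, 0] s := fun s hs =>
    funext hX ▸ hasDerivAt_hyperbolicPath c α β v hs.ne'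
  have hXdd : HasDerivAt (deriv X) ![-(2 * β * c * α / t ^ 3), 0, 0, 0] t := by
    refine (hasDerivAt_hyperbolicPath_velocity c α β v ht.ne').congr_of_eventuallyEq ?_
    filter_upwards [Ioi_mem_nhds ht] with s hs using (hXd s hs).deriv
  have hD := hyperbolicPath_denominator_pos c α v hα.le hv.le hvc ht.ne'
  have hab : (β * v) ^ 2 < (β * c * (1 + α / t ^ 2)) ^ 2 :=
    sub_pos.1 (by rw [hyperbolicPath_velocity_sq c α β v ht.ne']; positivity)
  have htl : 0 < minkowski (deriv X t) (deriv X t) := by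
    rw [(hXd t ht).deriv, minkowski_planar, ← sq, ← sq]; linarith
  have hUd : HasDerivAt U
      (normalizedVelocityDeriv (deriv X t) ![-(2 * β * c * α / t ^ 3), 0, 0, 0]) t := by
    rw [funext hU]; exact hXdd.minkowski_normalize htl
  refine ⟨htl, ?_⟩
  rw [hUd.deriv, minkowski_smul_smul, (hXd t ht).deriv,
    minkowski_normalizedVelocityDeriv_planar _ _ _ _ hab,
    hyperbolicPath_velocity_sq c α β v ht.ne', mul_neg, abs_neg, ← sq, ← mul_pow, abs_sq,
    Real.sqrt_sq_eq_abs, mul_zero, zero_sub, neg_mul, neg_neg, abs_of_pos (by positivity)]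
  field_simp
end

section
/- Fix reals c > 0, m > 0, α > 0 and v with 0 < v < c. Then the improper integral ∫_0^∞ 2·m·v·α·t·c² / ((α + t²)²·c² − v²·t⁴) dt converges and equals (m·c/2)·ln((c + v)/(c − v)) = m·c·artanh(v/c). In particular, the value does not depend on α. -/
/-- The real inverse hyperbolic tangent, defined on `(−1, 1)`. -/
noncomputable def artanh (x : ℝ) : ℝ := (1 / 2) * Real.log ((1 + x) / (1 - x))

/-!
The denominator factors as `(cα + (c+v)t²)(cα + (c−v)t²)`, and the integrand is `mc/2` times the
derivative of `log (cα + (c+v)t²) − log (cα + (c−v)t²)`. This primitive vanishes at `0` and tends to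
`log ((c+v)/(c−v))` at infinity; since the integrand is nonnegative, the improper integral converges
to the difference of these limits.
-/

open Filter Topology MeasureTheory Set

section QuadraticLogRatio

variable {a p q : ℝ}

lemma hasDerivAt_log_sub_log_quadratic (ha : 0 < a) (hp : 0 < p) (hq : 0 < q) (t : ℝ) :
    HasDerivAt (fun t => Real.log (a + p * t ^ 2) - Real.log (a + q * t ^ 2))
      (2 * (p - q) * a * t / ((a + p * t ^ 2) * (a + q * t ^ 2))) t := by
  have hP : 0 < a + p * t ^ 2 := by positivity
  have hQ : 0 < a + q * t ^ 2 := by positivity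
  have hderiv (r : ℝ) : HasDerivAt (fun t => a + r * t ^ 2) (r * (2 * t)) t := by
    simpa using ((hasDerivAt_pow 2 t).const_mul r).const_add a
  refine (((hderiv p).log hP.ne').sub ((hderiv q).log hQ.ne')).congr_deriv ?_
  rw [div_sub_div _ _ hP.ne' hQ.ne']
  ring

lemma tendsto_log_sub_log_quadratic (ha : 0 < a) (hp : 0 < p) (hq : 0 < q) :
    Tendsto (fun t => Real.log (a + p * t ^ 2) - Real.log (a + q * t ^ 2)) atTop
      (𝓝 (Real.log (p / q))) := by
  have hsmall : Tendsto (fun t : ℝ => a / t ^ 2) atTop (𝓝 0) :=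
    tendsto_const_nhds.div_atTop (tendsto_pow_atTop two_ne_zero)
  have hratio : Tendsto (fun t : ℝ => (a / t ^ 2 + p) / (a / t ^ 2 + q)) atTop (𝓝 (p / q)) := by
    have h := (hsmall.add_const p).div (hsmall.add_const q) (by simpa using hq.ne')
    rwa [zero_add, zero_add] at h
  have hratio' : Tendsto (fun t : ℝ => (a + p * t ^ 2) / (a + q * t ^ 2)) atTop (𝓝 (p / q)) := by
    refine hratio.congr' ?_
    filter_upwards [eventually_ne_atTop 0] with t ht
    field_simp
  refine ((Real.continuousAt_log (by positivity)).tendsto.comp hratio').congr fun t => ?_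
  have hP : 0 < a + p * t ^ 2 := by positivity
  have hQ : 0 < a + q * t ^ 2 := by positivity
  exact Real.log_div hP.ne' hQ.ne'

lemma integral_Ioi_quadratic_log_ratio (ha : 0 < a) (hq : 0 < q) (hqp : q ≤ p) :
    IntegrableOn (fun t => 2 * (p - q) * a * t / ((a + p * t ^ 2) * (a + q * t ^ 2))) (Ioi 0) ∧
      ∫ t in Ioi 0, 2 * (p - q) * a * t / ((a + p * t ^ 2) * (a + q * t ^ 2)) =
        Real.log (p / q) := by
  have hp : 0 < p := hq.trans_le hqp
  have hderiv : ∀ t ∈ Ici (0 : ℝ), HasDerivAt _ _ t := fun t _ =>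
    hasDerivAt_log_sub_log_quadratic ha hp hq t
  have hnonneg : ∀ t ∈ Ioi (0 : ℝ),
      0 ≤ 2 * (p - q) * a * t / ((a + p * t ^ 2) * (a + q * t ^ 2)) := fun t ht => by
    have : 0 ≤ p - q := sub_nonneg.2 hqp
    have : 0 < t := ht
    positivity
  have hlim := tendsto_log_sub_log_quadratic ha hp hq
  refine ⟨integrableOn_Ioi_deriv_of_nonneg' hderiv hnonneg hlim, ?_⟩
  simp [integral_Ioi_of_hasDerivAt_of_nonneg' hderiv hnonneg hlim]

end QuadraticLogRatio

lemma artanh_div {c : ℝ} (hc : c ≠ 0) (v : ℝ) :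
    artanh (v / c) = 1 / 2 * Real.log ((c + v) / (c - v)) := by
  rw [artanh, ← mul_div_mul_left (1 + v / c) (1 - v / c) hc, mul_add, mul_sub, mul_div_cancel₀ v hc,
    mul_one]

theorem ageodesicity_of_hyperbolic_path_general
    (c m α v : ℝ) (hc : 0 < c) (hα : 0 < α)
    (hv : 0 < v) (hvc : v < c) :
    MeasureTheory.IntegrableOn
      (fun t : ℝ =>
        2 * m * v * α * t * c ^ 2 / ((α + t ^ 2) ^ 2 * c ^ 2 - v ^ 2 * t ^ 4))
      (Set.Ioi 0) ∧
    (∫ t in Set.Ioi (0 : ℝ),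
        2 * m * v * α * t * c ^ 2 / ((α + t ^ 2) ^ 2 * c ^ 2 - v ^ 2 * t ^ 4))
      = (m * c / 2) * Real.log ((c + v) / (c - v)) ∧
    (m * c / 2) * Real.log ((c + v) / (c - v)) = m * c * artanh (v / c) := by
  have hintegrand : (fun t : ℝ =>
      2 * m * v * α * t * c ^ 2 / ((α + t ^ 2) ^ 2 * c ^ 2 - v ^ 2 * t ^ 4)) = fun t =>
      m * c / 2 * (2 * ((c + v) - (c - v)) * (c * α) * t /
        ((c * α + (c + v) * t ^ 2) * (c * α + (c - v) * t ^ 2))) := by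
    funext t
    ring
  obtain ⟨hint, hval⟩ :=
    integral_Ioi_quadratic_log_ratio (mul_pos hc hα) (sub_pos.2 hvc) (by linarith : c - v ≤ c + v)
  rw [hintegrand]
  refine ⟨hint.const_mul _, by rw [integral_const_mul, hval], ?_⟩
  rw [artanh_div hc.ne']
  ring

/-- The ageodesicity of the hyperbolic free-particle path: the improper
integral over `(0, ∞)` of `2 m v α t c² / ((α + t²)² c² − v² t⁴)` converges
and equals `(m c / 2) ln((c + v)/(c − v)) = m c · artanh(v/c)`; in particular
it does not depend on `α`. -/
theorem ageodesicity_of_hyperbolic_path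
    (c m α v : ℝ) (hc : 0 < c) (hm : 0 < m) (hα : 0 < α)
    (hv : 0 < v) (hvc : v < c) :
    MeasureTheory.IntegrableOn
      (fun t : ℝ =>
        2 * m * v * α * t * c ^ 2 / ((α + t ^ 2) ^ 2 * c ^ 2 - v ^ 2 * t ^ 4))
      (Set.Ioi 0) ∧
    (∫ t in Set.Ioi (0 : ℝ),
        2 * m * v * α * t * c ^ 2 / ((α + t ^ 2) ^ 2 * c ^ 2 - v ^ 2 * t ^ 4))
      = (m * c / 2) * Real.log ((c + v) / (c - v)) ∧
    (m * c / 2) * Real.log ((c + v) / (c - v)) = m * c * artanh (v / c) :=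
  ageodesicity_of_hyperbolic_path_general c m α v hc hα hv hvc
end
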